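/- arXiv:2506.17199 — 3 statements merged into one kernel-verified Lean document; each statement's English description precedes it below -/
import Mathlib

section
/- Let L_1,...,L_n be bounded operators in a Banach algebra and p_1,...,p_n ≥ 0 with ∑ p_k = 1. Suppose ‖exp(xL_k)‖ ≤ 1 for all x ∈ [0, τ] and all k, where τ ≥ 0. Then ‖∑_k p_k exp(τL_k) − 1 − τ ∑_k p_k L_k‖ ≤ (τ^2/2) ∑_k p_k ‖L_k‖^2. -/
open NormedSpace intervalIntegral

lemma qdrift_single_term_bound
    {A : Type*} [NormedRing A] [NormedAlgebra ℝ A] [CompleteSpace A]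
    (L : A) (τ : ℝ) (hτ : 0 ≤ τ)
    (hc : ∀ x ∈ Set.Icc (0:ℝ) τ, ‖exp (x • L)‖ ≤ 1) :
    ‖exp (τ • L) - 1 - τ • L‖ ≤ τ ^ 2 / 2 * ‖L‖ ^ 2 := by
  -- Step A: ‖exp (x•L) - 1‖ ≤ ‖L‖ * x on [0, τ]
  have hder : ∀ x : ℝ, HasDerivAt (fun t : ℝ => exp (t • L)) (exp (x • L) * L) x :=
    fun x => hasDerivAt_exp_smul_const L x
  have stepA : ∀ x ∈ Set.Icc (0:ℝ) τ, ‖exp (x • L) - 1‖ ≤ ‖L‖ * x := by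
    intro x hx
    have h := (convex_Icc (0:ℝ) τ).norm_image_sub_le_of_norm_hasDerivWithin_le
      (f := fun t : ℝ => exp (t • L)) (f' := fun t => exp (t • L) * L) (C := ‖L‖)
      (fun y hy => (hder y).hasDerivWithinAt)
      (fun y hy => by
        calc ‖exp (y • L) * L‖ ≤ ‖exp (y • L)‖ * ‖L‖ := norm_mul_le _ _
          _ ≤ 1 * ‖L‖ := by
              exact mul_le_mul_of_nonneg_right (hc y hy) (norm_nonneg _)
          _ = ‖L‖ := one_mul _)
      (Set.left_mem_Icc.2 hτ) hx
    simpa [zero_smul, exp_zero, Real.norm_eq_abs, abs_of_nonneg hx.1] using h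
  -- Step B: integral form
  have hF : ∀ x : ℝ, HasDerivAt (fun t : ℝ => exp (t • L) - t • L)
      (exp (x • L) * L - L) x := by
    intro x
    have h2 : HasDerivAt (fun t : ℝ => t • L) L x := by
      simpa using (hasDerivAt_id x).smul_const L
    exact (hder x).sub h2
  have hcont : Continuous (fun x : ℝ => exp (x • L) * L - L) := by
    have : Continuous fun x : ℝ => exp (x • L) :=
      (continuous_iff_continuousAt.2 fun y => (exp_analytic (𝕂 := ℝ) y).continuousAt).comp (continuous_id.smul continuous_const)
    exact (this.mul continuous_const).sub continuous_const
  have hint : IntervalIntegrable (fun x : ℝ => exp (x • L) * L - L) MeasureTheory.volume 0 τ :=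
    hcont.intervalIntegrable _ _
  have heq : exp (τ • L) - τ • L - (1 : A)
      = ∫ x in (0:ℝ)..τ, (exp (x • L) * L - L) := by
    have := intervalIntegral.integral_eq_sub_of_hasDerivAt
      (f := fun t : ℝ => exp (t • L) - t • L)
      (fun x _ => hF x) hint
    rw [this]
    simp [exp_zero]
  have hnorm : ∀ x ∈ Set.Icc (0:ℝ) τ, ‖exp (x • L) * L - L‖ ≤ ‖L‖ ^ 2 * x := by
    intro x hx
    calc ‖exp (x • L) * L - L‖ = ‖(exp (x • L) - 1) * L‖ := by
          rw [sub_mul, one_mul]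
      _ ≤ ‖exp (x • L) - 1‖ * ‖L‖ := norm_mul_le _ _
      _ ≤ (‖L‖ * x) * ‖L‖ :=
          mul_le_mul_of_nonneg_right (stepA x hx) (norm_nonneg _)
      _ = ‖L‖ ^ 2 * x := by ring
  calc ‖exp (τ • L) - 1 - τ • L‖
      = ‖∫ x in (0:ℝ)..τ, (exp (x • L) * L - L)‖ := by
        rw [← heq]; congr 1; abel
    _ ≤ ∫ x in (0:ℝ)..τ, ‖exp (x • L) * L - L‖ :=
        intervalIntegral.norm_integral_le_integral_norm hτ
    _ ≤ ∫ x in (0:ℝ)..τ, ‖L‖ ^ 2 * x := by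
        apply intervalIntegral.integral_mono_on hτ (hcont.norm.intervalIntegrable _ _)
          ((continuous_const.mul continuous_id).intervalIntegrable _ _)
        exact hnorm
    _ = ‖L‖ ^ 2 * (τ ^ 2 / 2) := by
        rw [intervalIntegral.integral_const_mul, integral_id]
        ring
    _ = τ ^ 2 / 2 * ‖L‖ ^ 2 := by ring

theorem qdrift_channel_taylor_remainder_bound
    {A : Type*} [NormedRing A] [NormedAlgebra ℝ A] [CompleteSpace A]
    (n : ℕ) (L : Fin n → A) (p : Fin n → ℝ)
    (hp : ∀ k, 0 ≤ p k) (hsum : ∑ k, p k = 1)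
    (τ : ℝ) (hτ : 0 ≤ τ)
    (hcontr : ∀ k, ∀ x ∈ Set.Icc (0:ℝ) τ, ‖NormedSpace.exp (x • L k)‖ ≤ 1) :
    ‖(∑ k, p k • NormedSpace.exp (τ • L k)) - 1 - τ • ∑ k, p k • L k‖
      ≤ (τ ^ 2 / 2) * ∑ k, p k * ‖L k‖ ^ 2 := by
  have h1 : ∑ k, p k • (1 : A) = 1 := by
    rw [← Finset.sum_smul, hsum, one_smul]
  have h2 : τ • ∑ k, p k • L k = ∑ k, p k • (τ • L k) := by
    rw [Finset.smul_sum]; exact Finset.sum_congr rfl fun k _ => smul_comm _ _ _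
  have hrw : (∑ k, p k • NormedSpace.exp (τ • L k)) - 1 - τ • ∑ k, p k • L k
      = ∑ k, p k • (NormedSpace.exp (τ • L k) - 1 - τ • L k) := by
    calc (∑ k, p k • NormedSpace.exp (τ • L k)) - 1 - τ • ∑ k, p k • L k
        = (∑ k, p k • NormedSpace.exp (τ • L k)) - (∑ k, p k • (1:A))
            - ∑ k, p k • (τ • L k) := by rw [h1, h2]
      _ = ∑ k, (p k • NormedSpace.exp (τ • L k) - p k • (1:A) - p k • (τ • L k)) := by
            rw [← Finset.sum_sub_distrib, ← Finset.sum_sub_distrib]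
      _ = ∑ k, p k • (NormedSpace.exp (τ • L k) - 1 - τ • L k) :=
            Finset.sum_congr rfl fun k _ => by rw [smul_sub, smul_sub]
  rw [hrw, Finset.mul_sum]
  refine (norm_sum_le _ _).trans (Finset.sum_le_sum fun k _ => ?_)
  rw [norm_smul, Real.norm_eq_abs, abs_of_nonneg (hp k)]
  calc p k * ‖NormedSpace.exp (τ • L k) - 1 - τ • L k‖
      ≤ p k * (τ ^ 2 / 2 * ‖L k‖ ^ 2) :=
        mul_le_mul_of_nonneg_left
          (qdrift_single_term_bound (L k) τ hτ (hcontr k)) (hp k)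
    _ = τ ^ 2 / 2 * (p k * ‖L k‖ ^ 2) := by ring
end

section
/- Let L = ∑_{k=1}^n λ_k L_k with λ_k ≥ 0, Γ = ∑_k λ_k > 0, p_k = λ_k/Γ, t ≥ 0, and r a positive integer. Assume ‖exp(x L)‖ ≤ 1 and ‖exp(x L_k)‖ ≤ 1 for all x ≥ 0 and all k. Then ‖exp((t/(rΓ))·L) − ∑_k p_k exp((t/r)·L_k)‖ ≤ (t/r)^2 · ∑_k p_k ‖L_k‖^2. -/
open NormedSpace Set

lemma exp_sub_one_norm_le {A : Type*} [NormedRing A] [NormedAlgebra ℝ A] [CompleteSpace A]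
    (T : A) (c : ℝ) (hc : 0 ≤ c)
    (hcontr : ∀ x : ℝ, 0 ≤ x → ‖NormedSpace.exp (x • T)‖ ≤ 1) :
    ‖NormedSpace.exp (c • T) - 1‖ ≤ ‖T‖ * c := by
  have hf : ∀ x ∈ Icc (0:ℝ) c, HasDerivWithinAt (fun u : ℝ => NormedSpace.exp (u • T))
      (T * NormedSpace.exp (x • T)) (Icc (0:ℝ) c) x :=
    fun x _ => (hasDerivAt_exp_smul_const' T x).hasDerivWithinAt
  have bound : ∀ x ∈ Ico (0:ℝ) c, ‖T * NormedSpace.exp (x • T)‖ ≤ ‖T‖ := by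
    intro x hx
    calc ‖T * NormedSpace.exp (x • T)‖ ≤ ‖T‖ * ‖NormedSpace.exp (x • T)‖ := norm_mul_le _ _
    _ ≤ ‖T‖ * 1 := mul_le_mul_of_nonneg_left (hcontr x hx.1) (norm_nonneg _)
    _ = ‖T‖ := mul_one _
  have := norm_image_sub_le_of_norm_deriv_le_segment' hf bound c (right_mem_Icc.2 hc)
  simpa [zero_smul, exp_zero] using this

lemma exp_remainder_norm_le {A : Type*} [NormedRing A] [NormedAlgebra ℝ A] [CompleteSpace A]
    (T : A) (c : ℝ) (hc : 0 ≤ c)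
    (hcontr : ∀ x : ℝ, 0 ≤ x → ‖NormedSpace.exp (x • T)‖ ≤ 1) :
    ‖NormedSpace.exp (c • T) - 1 - c • T‖ ≤ ‖T‖ ^ 2 * c ^ 2 / 2 := by
  set g : ℝ → A := fun u => NormedSpace.exp (u • T) - 1 - u • T with hg
  have hg' : ∀ x : ℝ, HasDerivAt g (T * NormedSpace.exp (x • T) - T) x := by
    intro x
    have h1 := (hasDerivAt_exp_smul_const' T x)
    have h2 : HasDerivAt (fun u : ℝ => u • T) T x := by
      simpa using (hasDerivAt_id x).smul_const T
    exact (h1.sub_const 1).sub h2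
  have hcont : ContinuousOn g (Icc (0:ℝ) c) :=
    fun x _ => ((hg' x).continuousAt).continuousWithinAt
  have hB : ∀ x : ℝ, HasDerivAt (fun u : ℝ => ‖T‖ ^ 2 * u ^ 2 / 2) (‖T‖ ^ 2 * x) x := by
    intro x
    have : HasDerivAt (fun u : ℝ => ‖T‖ ^ 2 * u ^ 2 / 2) (‖T‖ ^ 2 * (((2:ℕ):ℝ) * x ^ (2 - 1)) / 2) x := ((hasDerivAt_pow 2 x).const_mul (‖T‖ ^ 2)).div_const 2
    convert this using 1
    ring
  have bound : ∀ x ∈ Ico (0:ℝ) c, ‖T * NormedSpace.exp (x • T) - T‖ ≤ ‖T‖ ^ 2 * x := by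
    intro x hx
    have : T * NormedSpace.exp (x • T) - T = T * (NormedSpace.exp (x • T) - 1) := by rw [mul_sub, mul_one]
    rw [this]
    calc ‖T * (NormedSpace.exp (x • T) - 1)‖ ≤ ‖T‖ * ‖NormedSpace.exp (x • T) - 1‖ := norm_mul_le _ _
    _ ≤ ‖T‖ * (‖T‖ * x) :=
        mul_le_mul_of_nonneg_left (exp_sub_one_norm_le T x hx.1 hcontr) (norm_nonneg _)
    _ = ‖T‖ ^ 2 * x := by ring
  have key := image_norm_le_of_norm_deriv_right_le_deriv_boundary hcont
    (fun x hx => (hg' x).hasDerivWithinAt) (B := fun u => ‖T‖ ^ 2 * u ^ 2 / 2)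
    (by simp [hg, exp_zero]) hB bound (right_mem_Icc.2 hc)
  simpa [hg] using key

theorem qdrift_single_step_error_bound
    {A : Type*} [NormedRing A] [NormedAlgebra ℝ A] [CompleteSpace A]
    (n : ℕ) (L : Fin n → A) (lam : Fin n → ℝ) (Γ : ℝ)
    (hlam : ∀ k, 0 ≤ lam k) (hΓ : Γ = ∑ k, lam k) (hΓpos : 0 < Γ)
    (t : ℝ) (ht : 0 ≤ t) (r : ℕ) (hr : 0 < r)
    (hcontrL : ∀ x : ℝ, 0 ≤ x → ‖NormedSpace.exp (x • (∑ k, lam k • L k))‖ ≤ 1)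
    (hcontrk : ∀ k, ∀ x : ℝ, 0 ≤ x → ‖NormedSpace.exp (x • L k)‖ ≤ 1) :
    ‖NormedSpace.exp ((t / (r * Γ)) • (∑ k, lam k • L k))
        - ∑ k, (lam k / Γ) • NormedSpace.exp ((t / r) • L k)‖
      ≤ (t / r) ^ 2 * ∑ k, (lam k / Γ) * ‖L k‖ ^ 2 := by
  have hrR : (0:ℝ) < (r:ℝ) := by exact_mod_cast hr
  set L' : A := ∑ k, lam k • L k with hL'
  set s : ℝ := t / (r:ℝ) with hs
  set τ : ℝ := t / ((r:ℝ) * Γ) with hτ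
  set p : Fin n → ℝ := fun k => lam k / Γ with hp
  have hpnn : ∀ k, 0 ≤ p k := fun k => div_nonneg (hlam k) hΓpos.le
  have hsnn : 0 ≤ s := div_nonneg ht hrR.le
  have hτnn : 0 ≤ τ := div_nonneg ht (mul_nonneg hrR.le hΓpos.le)
  have hsum_p : ∑ k, p k = 1 := by
    simp only [hp, ← Finset.sum_div, ← hΓ, div_self hΓpos.ne']
  have hps : ∀ k, p k * s = τ * lam k := by
    intro k; simp only [hp, hs, hτ]; field_simp
  -- the key algebraic identity
  have h2 : ∑ k, p k • (1:A) = 1 := by rw [← Finset.sum_smul, hsum_p, one_smul]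
  have h3 : ∑ k, p k • (s • L k) = τ • L' := by
    rw [hL', Finset.smul_sum]
    refine Finset.sum_congr rfl fun k _ => ?_
    rw [smul_smul, smul_smul, hps k]
  have hid : NormedSpace.exp (τ • L') - ∑ k, p k • NormedSpace.exp (s • L k)
      = (NormedSpace.exp (τ • L') - 1 - τ • L')
        - ∑ k, p k • (NormedSpace.exp (s • L k) - 1 - s • L k) := by
    simp only [smul_sub, Finset.sum_sub_distrib, h2, h3]
    abel
  -- Jensen / Cauchy-Schwarz
  have jensen : (∑ k, p k * ‖L k‖) ^ 2 ≤ ∑ k, p k * ‖L k‖ ^ 2 := by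
    have cs := Finset.sum_mul_sq_le_sq_mul_sq Finset.univ
      (fun k => Real.sqrt (p k)) (fun k => Real.sqrt (p k) * ‖L k‖)
    calc (∑ k, p k * ‖L k‖) ^ 2
        = (∑ k, Real.sqrt (p k) * (Real.sqrt (p k) * ‖L k‖)) ^ 2 := by
          congr 1
          refine Finset.sum_congr rfl fun k _ => ?_
          rw [← mul_assoc, Real.mul_self_sqrt (hpnn k)]
      _ ≤ (∑ k, Real.sqrt (p k) ^ 2) * ∑ k, (Real.sqrt (p k) * ‖L k‖) ^ 2 := cs
      _ = (∑ k, p k) * ∑ k, p k * ‖L k‖ ^ 2 := by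
          congr 1
          · exact Finset.sum_congr rfl fun k _ => Real.sq_sqrt (hpnn k)
          · refine Finset.sum_congr rfl fun k _ => ?_
            rw [mul_pow, Real.sq_sqrt (hpnn k)]
      _ = ∑ k, p k * ‖L k‖ ^ 2 := by rw [hsum_p, one_mul]
  -- bound on τ * ‖L'‖
  have hLnorm : τ * ‖L'‖ ≤ s * ∑ k, p k * ‖L k‖ := by
    calc τ * ‖L'‖ ≤ τ * ∑ k, lam k * ‖L k‖ := by
          refine mul_le_mul_of_nonneg_left ?_ hτnn
          calc ‖L'‖ ≤ ∑ k, ‖lam k • L k‖ := norm_sum_le _ _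
            _ = ∑ k, lam k * ‖L k‖ := Finset.sum_congr rfl fun k _ => by
                rw [norm_smul, Real.norm_of_nonneg (hlam k)]
      _ = s * ∑ k, p k * ‖L k‖ := by
          rw [Finset.mul_sum, Finset.mul_sum]
          refine Finset.sum_congr rfl fun k _ => ?_
          rw [← mul_assoc, ← mul_assoc, mul_comm s (p k), hps k]
  set X : ℝ := ∑ k, p k * ‖L k‖ ^ 2 with hX
  have hXnn : 0 ≤ ∑ k, p k * ‖L k‖ := Finset.sum_nonneg fun k _ =>
    mul_nonneg (hpnn k) (norm_nonneg _)
  -- first term bound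
  have hfirst : ‖NormedSpace.exp (τ • L') - 1 - τ • L'‖ ≤ s ^ 2 * X / 2 := by
    refine (exp_remainder_norm_le L' τ hτnn hcontrL).trans ?_
    have h1 : ‖L'‖ ^ 2 * τ ^ 2 = (τ * ‖L'‖) ^ 2 := by ring
    have h2' : (τ * ‖L'‖) ^ 2 ≤ (s * ∑ k, p k * ‖L k‖) ^ 2 :=
      pow_le_pow_left₀ (mul_nonneg hτnn (norm_nonneg _)) hLnorm 2
    have h3' : (s * ∑ k, p k * ‖L k‖) ^ 2 ≤ s ^ 2 * X := by
      rw [mul_pow]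
      exact mul_le_mul_of_nonneg_left jensen (sq_nonneg s)
    nlinarith
  -- second term bound
  have hsecond : ‖∑ k, p k • (NormedSpace.exp (s • L k) - 1 - s • L k)‖ ≤ s ^ 2 * X / 2 := by
    calc ‖∑ k, p k • (NormedSpace.exp (s • L k) - 1 - s • L k)‖
        ≤ ∑ k, ‖p k • (NormedSpace.exp (s • L k) - 1 - s • L k)‖ := norm_sum_le _ _
      _ ≤ ∑ k, p k * (‖L k‖ ^ 2 * s ^ 2 / 2) := by
          refine Finset.sum_le_sum fun k _ => ?_
          rw [norm_smul, Real.norm_of_nonneg (hpnn k)]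
          exact mul_le_mul_of_nonneg_left
            (exp_remainder_norm_le (L k) s hsnn (hcontrk k)) (hpnn k)
      _ = s ^ 2 * X / 2 := by
          rw [hX, Finset.mul_sum, Finset.sum_div]
          exact Finset.sum_congr rfl fun k _ => by ring
  calc ‖NormedSpace.exp (τ • L') - ∑ k, p k • NormedSpace.exp (s • L k)‖
      = ‖(NormedSpace.exp (τ • L') - 1 - τ • L')
          - ∑ k, p k • (NormedSpace.exp (s • L k) - 1 - s • L k)‖ := by rw [hid]
    _ ≤ ‖NormedSpace.exp (τ • L') - 1 - τ • L'‖
          + ‖∑ k, p k • (NormedSpace.exp (s • L k) - 1 - s • L k)‖ := norm_sub_le _ _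
    _ ≤ s ^ 2 * X / 2 + s ^ 2 * X / 2 := add_le_add hfirst hsecond
    _ = s ^ 2 * X := by ring
end

section
/- Let L = ∑_{k=1}^n λ_k L_k with λ_k ≥ 0, Γ = ∑_k λ_k a positive integer multiple structure such that rΓ is a natural number, p_k = λ_k/Γ, t ≥ 0, r a positive integer with m := rΓ ∈ ℕ. Assume ‖exp(x L)‖ ≤ 1 and ‖exp(x L_k)‖ ≤ 1 for all x ≥ 0 and all k. Then ‖exp(tL) − (∑_k p_k exp((t/r)·L_k))^m‖ ≤ (t^2/r) · ∑_k λ_k ‖L_k‖^2. -/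
open NormedSpace Set Finset

section aux
variable {A : Type*} [NormedRing A] [NormedAlgebra ℝ A] [CompleteSpace A]

lemma qdrift_exp_sub_one (M : A) (hc : ∀ x : ℝ, 0 ≤ x → ‖exp (x • M)‖ ≤ 1)
    {x : ℝ} (hx : 0 ≤ x) : ‖exp (x • M) - 1‖ ≤ x * ‖M‖ := by
  have h := Convex.norm_image_sub_le_of_norm_hasDerivWithin_le
    (f := fun u : ℝ => exp (u • M)) (f' := fun u : ℝ => exp (u • M) * M)
    (s := Icc (0:ℝ) x) (C := ‖M‖)
    (fun u _ => (hasDerivAt_exp_smul_const M u).hasDerivWithinAt)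
    (fun u hu => by
      calc ‖exp (u • M) * M‖ ≤ ‖exp (u • M)‖ * ‖M‖ := norm_mul_le _ _
        _ ≤ 1 * ‖M‖ := by
            exact mul_le_mul_of_nonneg_right (hc u hu.1) (norm_nonneg _)
        _ = ‖M‖ := one_mul _)
    (convex_Icc 0 x) (left_mem_Icc.2 hx) (right_mem_Icc.2 hx)
  simpa [exp_zero, abs_of_nonneg hx, mul_comm] using h

lemma qdrift_exp_taylor (M : A) (hc : ∀ x : ℝ, 0 ≤ x → ‖exp (x • M)‖ ≤ 1)
    {x : ℝ} (hx : 0 ≤ x) :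
    ‖exp (x • M) - 1 - x • M‖ ≤ x ^ 2 * (‖M‖ ^ 2 / 2) := by
  have hcont : ContinuousOn (fun u : ℝ => exp (u • M) - 1 - u • M) (Icc 0 x) := by
    let +nondep : NormedAlgebra ℚ A := NormedAlgebra.restrictScalars ℚ ℝ A
    have : Continuous fun u : ℝ => exp (u • M) - 1 - u • M :=
      ((exp_continuous.comp (continuous_id.smul continuous_const)).sub
        continuous_const).sub (continuous_id.smul continuous_const)
    exact this.continuousOn
  have hderiv : ∀ u ∈ Ico (0:ℝ) x,
      HasDerivWithinAt (fun u : ℝ => exp (u • M) - 1 - u • M)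
        (exp (u • M) * M - M) (Ici u) u := by
    intro u _
    have h1 : HasDerivAt (fun u : ℝ => exp (u • M) - 1 - u • M)
        (exp (u • M) * M - M) u := by
      have := ((hasDerivAt_exp_smul_const M u).sub_const 1).sub
        ((hasDerivAt_id u).smul_const M)
      rw [one_smul] at this
      exact this
    exact h1.hasDerivWithinAt
  have hB : ∀ u : ℝ, HasDerivAt (fun u : ℝ => u ^ 2 * (‖M‖ ^ 2 / 2)) (u * ‖M‖ ^ 2) u := by
    intro u
    have := (hasDerivAt_pow 2 u).mul_const (‖M‖ ^ 2 / 2)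
    convert this using 1
    · rfl
    · rfl
    simp
    ring
  have hbound : ∀ u ∈ Ico (0:ℝ) x, ‖exp (u • M) * M - M‖ ≤ u * ‖M‖ ^ 2 := by
    intro u hu
    calc ‖exp (u • M) * M - M‖ = ‖(exp (u • M) - 1) * M‖ := by
          rw [sub_mul, one_mul]
      _ ≤ ‖exp (u • M) - 1‖ * ‖M‖ := norm_mul_le _ _
      _ ≤ (u * ‖M‖) * ‖M‖ :=
          mul_le_mul_of_nonneg_right (qdrift_exp_sub_one M hc hu.1) (norm_nonneg _)
      _ = u * ‖M‖ ^ 2 := by ring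
  have ha : ‖(fun u : ℝ => exp (u • M) - 1 - u • M) 0‖ ≤ (0:ℝ) ^ 2 * (‖M‖ ^ 2 / 2) := by
    simp [exp_zero]
  have := image_norm_le_of_norm_deriv_right_le_deriv_boundary hcont hderiv ha hB hbound
  exact this (right_mem_Icc.2 hx)

omit [NormedAlgebra ℝ A] [CompleteSpace A] in
lemma qdrift_pow_mul_norm (a : A) (ha : ‖a‖ ≤ 1) (m : ℕ) (c : A) :
    ‖a ^ m * c‖ ≤ ‖c‖ := by
  induction m with
  | zero => simp
  | succ m ih =>
    rw [pow_succ', mul_assoc]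
    calc ‖a * (a ^ m * c)‖ ≤ ‖a‖ * ‖a ^ m * c‖ := norm_mul_le _ _
      _ ≤ 1 * ‖c‖ := mul_le_mul ha ih (norm_nonneg _) zero_le_one
      _ = ‖c‖ := one_mul _

omit [NormedAlgebra ℝ A] [CompleteSpace A] in
lemma qdrift_telescope (a b : A) (ha : ‖a‖ ≤ 1) (hb : ‖b‖ ≤ 1) (m : ℕ) :
    ‖a ^ m - b ^ m‖ ≤ m * ‖a - b‖ := by
  induction m with
  | zero => simp
  | succ m ih =>
    have hid : a ^ (m + 1) - b ^ (m + 1) = a ^ m * (a - b) + (a ^ m - b ^ m) * b := by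
      rw [pow_succ, pow_succ]
      noncomm_ring
    rw [hid]
    calc ‖a ^ m * (a - b) + (a ^ m - b ^ m) * b‖
        ≤ ‖a ^ m * (a - b)‖ + ‖(a ^ m - b ^ m) * b‖ := norm_add_le _ _
      _ ≤ ‖a - b‖ + ‖a ^ m - b ^ m‖ * ‖b‖ :=
          add_le_add (qdrift_pow_mul_norm a ha m _) (norm_mul_le _ _)
      _ ≤ ‖a - b‖ + (m * ‖a - b‖) * 1 := by
          apply add_le_add le_rfl
          exact mul_le_mul ih hb (norm_nonneg _) (by positivity)
      _ = (m + 1 : ℕ) * ‖a - b‖ := by push_cast; ring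

end aux

theorem qdrift_theorem_one
    {A : Type*} [NormedRing A] [NormedAlgebra ℝ A] [CompleteSpace A]
    (n : ℕ) (L : Fin n → A) (lam : Fin n → ℝ) (Γ : ℝ)
    (hlam : ∀ k, 0 ≤ lam k) (hΓ : Γ = ∑ k, lam k) (hΓpos : 0 < Γ)
    (t : ℝ) (ht : 0 ≤ t) (r : ℕ) (hr : 0 < r)
    (m : ℕ) (hm : (m : ℝ) = r * Γ)
    (hcontrL : ∀ x : ℝ, 0 ≤ x → ‖NormedSpace.exp (x • (∑ k, lam k • L k))‖ ≤ 1)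
    (hcontrk : ∀ k, ∀ x : ℝ, 0 ≤ x → ‖NormedSpace.exp (x • L k)‖ ≤ 1) :
    ‖NormedSpace.exp (t • (∑ k, lam k • L k))
        - (∑ k, (lam k / Γ) • NormedSpace.exp ((t / r) • L k)) ^ m‖
      ≤ (t ^ 2 / r) * ∑ k, lam k * ‖L k‖ ^ 2 := by
  set Lsum : A := ∑ k, lam k • L k with hLsum
  have hrpos : (0:ℝ) < r := by exact_mod_cast hr
  set τ : ℝ := t / (r * Γ) with hτ
  set s : ℝ := t / r with hs
  have hτ0 : 0 ≤ τ := div_nonneg ht (by positivity)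
  have hs0 : 0 ≤ s := div_nonneg ht hrpos.le
  have hpsum : ∑ k, lam k / Γ = 1 := by
    rw [← Finset.sum_div, ← hΓ, div_self hΓpos.ne']
  -- the step operators
  set B : A := ∑ k, (lam k / Γ) • exp (s • L k) with hB
  have hτs : ∀ k, (lam k / Γ) * s = τ * lam k := by
    intro k
    rw [hτ, hs]
    field_simp
  -- exp(t L) = exp(τ L)^m
  have hexp_pow : exp (t • Lsum) = (exp (τ • Lsum)) ^ m := by
    have hts : t = (m : ℝ) * τ := by
      rw [hm, hτ]
      field_simp
    let +nondep : NormedAlgebra ℚ A := NormedAlgebra.restrictScalars ℚ ℝ A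
    rw [← exp_nsmul, ← Nat.cast_smul_eq_nsmul ℝ, smul_smul, ← hts]
  -- norms ≤ 1
  have hAnorm : ‖exp (τ • Lsum)‖ ≤ 1 := hcontrL τ hτ0
  have hBnorm : ‖B‖ ≤ 1 := by
    calc ‖B‖ ≤ ∑ k, ‖(lam k / Γ) • exp (s • L k)‖ := norm_sum_le _ _
      _ ≤ ∑ k, lam k / Γ := by
          apply Finset.sum_le_sum
          intro k _
          rw [norm_smul, Real.norm_eq_abs, abs_of_nonneg (div_nonneg (hlam k) hΓpos.le)]
          calc (lam k / Γ) * ‖exp (s • L k)‖ ≤ (lam k / Γ) * 1 :=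
                mul_le_mul_of_nonneg_left (hcontrk k s hs0) (div_nonneg (hlam k) hΓpos.le)
            _ = lam k / Γ := mul_one _
      _ = 1 := hpsum
  -- step error
  have hsumdecomp : ∑ k, (lam k / Γ) • (exp (s • L k) - 1 - s • L k)
      = B - 1 - τ • Lsum := by
    rw [hB]
    simp only [smul_sub]
    rw [Finset.sum_sub_distrib, Finset.sum_sub_distrib]
    congr 1
    · congr 1
      rw [← Finset.sum_smul, hpsum, one_smul]
    · rw [hLsum, Finset.smul_sum]
      apply Finset.sum_congr rfl
      intro k _
      rw [smul_smul, hτs k, ← smul_smul]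
  have hstep : ‖exp (τ • Lsum) - B‖ ≤ s ^ 2 * ∑ k, (lam k / Γ) * ‖L k‖ ^ 2 := by
    have hdecomp : exp (τ • Lsum) - B
        = (exp (τ • Lsum) - 1 - τ • Lsum)
          - ∑ k, (lam k / Γ) • (exp (s • L k) - 1 - s • L k) := by
      rw [hsumdecomp]; abel
    rw [hdecomp]
    have h1 : ‖exp (τ • Lsum) - 1 - τ • Lsum‖ ≤ τ ^ 2 * (‖Lsum‖ ^ 2 / 2) :=
      qdrift_exp_taylor Lsum hcontrL hτ0
    have h2 : ‖∑ k, (lam k / Γ) • (exp (s • L k) - 1 - s • L k)‖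
        ≤ ∑ k, (lam k / Γ) * (s ^ 2 * (‖L k‖ ^ 2 / 2)) := by
      calc ‖∑ k, (lam k / Γ) • (exp (s • L k) - 1 - s • L k)‖
          ≤ ∑ k, ‖(lam k / Γ) • (exp (s • L k) - 1 - s • L k)‖ := norm_sum_le _ _
        _ ≤ ∑ k, (lam k / Γ) * (s ^ 2 * (‖L k‖ ^ 2 / 2)) := by
            apply Finset.sum_le_sum
            intro k _
            rw [norm_smul, Real.norm_eq_abs, abs_of_nonneg (div_nonneg (hlam k) hΓpos.le)]
            exact mul_le_mul_of_nonneg_left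
              (qdrift_exp_taylor (L k) (hcontrk k) hs0) (div_nonneg (hlam k) hΓpos.le)
    -- τ ‖Lsum‖ ≤ s ∑ p_k ‖L k‖
    have hLnorm : τ * ‖Lsum‖ ≤ s * ∑ k, (lam k / Γ) * ‖L k‖ := by
      calc τ * ‖Lsum‖ ≤ τ * ∑ k, lam k * ‖L k‖ := by
            apply mul_le_mul_of_nonneg_left _ hτ0
            calc ‖Lsum‖ ≤ ∑ k, ‖lam k • L k‖ := norm_sum_le _ _
              _ = ∑ k, lam k * ‖L k‖ := by
                  apply Finset.sum_congr rfl
                  intro k _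
                  rw [norm_smul, Real.norm_eq_abs, abs_of_nonneg (hlam k)]
        _ = s * ∑ k, (lam k / Γ) * ‖L k‖ := by
            rw [Finset.mul_sum, Finset.mul_sum]
            apply Finset.sum_congr rfl
            intro k _
            rw [← mul_assoc, ← hτs k]
            ring
    -- Jensen / Cauchy-Schwarz
    have hCS : (∑ k, (lam k / Γ) * ‖L k‖) ^ 2 ≤ ∑ k, (lam k / Γ) * ‖L k‖ ^ 2 := by
      have := Finset.sum_sq_le_sum_mul_sum_of_sq_eq_mul Finset.univ
        (r := fun k => (lam k / Γ) * ‖L k‖) (f := fun k => lam k / Γ)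
        (g := fun k => (lam k / Γ) * ‖L k‖ ^ 2)
        (fun k _ => div_nonneg (hlam k) hΓpos.le)
        (fun k _ => mul_nonneg (div_nonneg (hlam k) hΓpos.le) (sq_nonneg _))
        (fun k _ => by ring)
      rw [hpsum, one_mul] at this
      exact this
    have hsq : (τ * ‖Lsum‖) ^ 2 ≤ (s * ∑ k, (lam k / Γ) * ‖L k‖) ^ 2 := by
      apply pow_le_pow_left₀ (by positivity) hLnorm
    have h1' : τ ^ 2 * (‖Lsum‖ ^ 2 / 2) ≤ s ^ 2 * (∑ k, (lam k / Γ) * ‖L k‖ ^ 2) / 2 := by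
      have : (τ * ‖Lsum‖) ^ 2 ≤ s ^ 2 * ∑ k, (lam k / Γ) * ‖L k‖ ^ 2 := by
        calc (τ * ‖Lsum‖) ^ 2 ≤ (s * ∑ k, (lam k / Γ) * ‖L k‖) ^ 2 := hsq
          _ = s ^ 2 * (∑ k, (lam k / Γ) * ‖L k‖) ^ 2 := by ring
          _ ≤ s ^ 2 * ∑ k, (lam k / Γ) * ‖L k‖ ^ 2 :=
              mul_le_mul_of_nonneg_left hCS (by positivity)
      nlinarith [this]
    have h2' : ∑ k, (lam k / Γ) * (s ^ 2 * (‖L k‖ ^ 2 / 2))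
        = s ^ 2 * (∑ k, (lam k / Γ) * ‖L k‖ ^ 2) / 2 := by
      rw [Finset.mul_sum, Finset.sum_div]
      apply Finset.sum_congr rfl
      intro k _
      ring
    calc ‖(exp (τ • Lsum) - 1 - τ • Lsum)
          - ∑ k, (lam k / Γ) • (exp (s • L k) - 1 - s • L k)‖
        ≤ ‖exp (τ • Lsum) - 1 - τ • Lsum‖
          + ‖∑ k, (lam k / Γ) • (exp (s • L k) - 1 - s • L k)‖ := norm_sub_le _ _
      _ ≤ s ^ 2 * (∑ k, (lam k / Γ) * ‖L k‖ ^ 2) / 2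
          + s ^ 2 * (∑ k, (lam k / Γ) * ‖L k‖ ^ 2) / 2 := by
          apply add_le_add (le_trans h1 h1') (le_trans h2 (le_of_eq h2'))
      _ = s ^ 2 * ∑ k, (lam k / Γ) * ‖L k‖ ^ 2 := by ring
  -- combine
  rw [hexp_pow]
  calc ‖(exp (τ • Lsum)) ^ m - B ^ m‖ ≤ m * ‖exp (τ • Lsum) - B‖ :=
        qdrift_telescope _ _ hAnorm hBnorm m
    _ ≤ m * (s ^ 2 * ∑ k, (lam k / Γ) * ‖L k‖ ^ 2) :=
        mul_le_mul_of_nonneg_left hstep (Nat.cast_nonneg m)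
    _ = (t ^ 2 / r) * ∑ k, lam k * ‖L k‖ ^ 2 := by
        rw [hm, hs]
        rw [show ∑ k, (lam k / Γ) * ‖L k‖ ^ 2 = (∑ k, lam k * ‖L k‖ ^ 2) / Γ by
          rw [Finset.sum_div]; apply Finset.sum_congr rfl; intro k _; ring]
        field_simp
end
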